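/- (Three-distance theorem, largest gap) For any irrational α and positive integer n, if the gaps between consecutive points {kα}, 0 ≤ k < n, on the circle take three distinct values, then the largest gap length equals the sum of the other two. -/

import Mathlib

/-- The points `{k·α}` for `0 ≤ k < n` on the circle `ℝ/ℤ`,
represented by their fractional parts in `[0,1)`. -/
def scalePoints (α : ℝ) (n : ℕ) : Set ℝ :=
  {x | ∃ k < n, x = Int.fract (k * α)}

/-- The gap (arc length, in the positive direction) from a point `x`
to the next point of `S` on the circle of circumference 1. -/
noncomputable def gapOf (S : Set ℝ) (x : ℝ) : ℝ :=
  sInf ((fun y => Int.fract (y - x)) '' (S \ {x}))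

/-- The set of gap lengths between circularly consecutive points
among `{k·α}`, `0 ≤ k < n`. -/
noncomputable def gapSet (α : ℝ) (n : ℕ) : Set ℝ :=
  (fun x => gapOf (scalePoints α n) x) '' scalePoints α n

/-!
Let `d = {pα}` be the least and `1 - e = {qα}` the largest of the `{mα}`, `0 < m < n`. Seen from
the point `{kα}`, the other points sit at `{mα}` for `m ≠ 0` in the window `-k ≤ m < n - k`, and
the gap after `{kα}` is the least of these. If the step `p` fits in the window, the gap is `d`; if
the step `-q` fits, it is `e`; if neither fits, the step `p - q` does, and the gap is `d + e`.
Each lower bound comes from combining a putative smaller step with `p` or `q` into an index in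
`(0, n)` that would beat the minimality of `p` or the maximality of `q`. So every gap is one of
`d`, `e`, `d + e` with `d, e > 0`, and when three values occur the largest is `d + e`.
-/

namespace Int

variable {R : Type*} [Ring R] [LinearOrder R] [IsStrictOrderedRing R] [FloorRing R] {a b : R}

theorem fract_sub_of_fract_le (h : fract b ≤ fract a) : fract (a - b) = fract a - fract b :=
  fract_eq_iff.2 ⟨sub_nonneg.2 h, (sub_le_self _ (fract_nonneg b)).trans_lt (fract_lt_one a),
    ⌊a⌋ - ⌊b⌋, by simp only [fract]; push_cast; abel⟩

theorem fract_sub_of_fract_lt (h : fract a < fract b) :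
    fract (a - b) = fract a - fract b + 1 := by
  refine fract_eq_iff.2 ⟨?_, by rw [add_lt_iff_neg_right]; exact sub_neg.2 h,
    ⌊a⌋ - ⌊b⌋ - 1, by simp only [fract]; push_cast; abel⟩
  rw [sub_add_eq_add_sub, add_sub_assoc]
  exact add_nonneg (fract_nonneg a) (sub_nonneg.2 (fract_lt_one b).le)

theorem fract_add_of_fract_add_lt_one (h : fract a + fract b < 1) :
    fract (a + b) = fract a + fract b :=
  fract_eq_iff.2 ⟨add_nonneg (fract_nonneg a) (fract_nonneg b), h,
    ⌊a⌋ + ⌊b⌋, by simp only [fract]; push_cast; abel⟩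

theorem fract_fract_sub_fract (a b : R) : fract (fract a - fract b) = fract (a - b) :=
  fract_eq_fract.2 ⟨⌊b⌋ - ⌊a⌋, by simp only [fract]; push_cast; abel⟩

end Int

namespace Irrational

variable {α : ℝ}

theorem fract_intCast_mul_pos (hα : Irrational α) {m : ℤ} (hm : m ≠ 0) :
    0 < Int.fract (m * α) :=
  Int.fract_pos.2 fun h => (hα.intCast_mul hm).ne_int _ h

theorem injective_fract_intCast_mul (hα : Irrational α) :
    Function.Injective fun m : ℤ => Int.fract (m * α) := by
  intro a b h
  obtain ⟨z, hz⟩ := Int.fract_eq_fract.1 h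
  by_contra hab
  exact (hα.intCast_mul (sub_ne_zero.2 hab)).ne_int z (by push_cast; linarith)

theorem fract_intCast_mul_add_fract_neg (hα : Irrational α) {m : ℤ} (hm : m ≠ 0) :
    Int.fract (m * α) + Int.fract ((-m : ℤ) * α) = 1 := by
  rw [Int.cast_neg, neg_mul, Int.fract_neg (hα.fract_intCast_mul_pos hm).ne']
  abel

end Irrational

/-- The arcs `{mα} = {jα - kα}` from the point `{kα}` to the other points `{jα}`, `0 ≤ j < n`. -/
def relativePositions (α : ℝ) (n k : ℤ) : Set ℝ :=
  (fun m : ℤ => Int.fract (m * α)) '' (Set.Ico (-k) (n - k) \ {0})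

section RelativePositions

variable {α : ℝ} {n p q k : ℤ}

theorem isLeast_relativePositions_fract (hα : Irrational α)
    (hpmin : ∀ m ∈ Set.Ico 1 n, Int.fract (p * α) ≤ Int.fract (m * α))
    (hp : 1 ≤ p) (hk : 0 ≤ k) (hpk : p < n - k) :
    IsLeast (relativePositions α n k) (Int.fract (p * α)) := by
  refine ⟨⟨p, ⟨⟨by omega, hpk⟩, by simp only [Set.mem_singleton_iff]; omega⟩, rfl⟩, ?_⟩
  rintro _ ⟨m, ⟨⟨hlo, hhi⟩, hm0 : m ≠ 0⟩, rfl⟩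
  rcases hm0.lt_or_gt with hneg | hpos
  · by_contra! hlt
    have hsub := hpmin (p - m) ⟨by omega, by omega⟩
    rw [Int.cast_sub, sub_mul, Int.fract_sub_of_fract_le hlt.le] at hsub
    linarith [hα.fract_intCast_mul_pos hm0]
  · exact hpmin m ⟨hpos, by omega⟩

theorem isLeast_relativePositions_one_sub_fract (hα : Irrational α)
    (hqmax : ∀ m ∈ Set.Ico 1 n, Int.fract (m * α) ≤ Int.fract (q * α))
    (hq : 1 ≤ q) (hqk : q ≤ k) (hkn : k < n) :
    IsLeast (relativePositions α n k) (1 - Int.fract (q * α)) := by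
  refine ⟨⟨-q, ⟨⟨by omega, by omega⟩, by simp only [Set.mem_singleton_iff]; omega⟩, ?_⟩, ?_⟩
  · linarith [hα.fract_intCast_mul_add_fract_neg (m := q) (by omega)]
  rintro _ ⟨m, ⟨⟨hlo, hhi⟩, hm0 : m ≠ 0⟩, rfl⟩
  rcases hm0.lt_or_gt with hneg | hpos
  · linarith [hα.fract_intCast_mul_add_fract_neg hm0, hqmax (-m) ⟨by omega, by omega⟩]
  · by_contra! hlt
    have hadd := hqmax (q + m) ⟨by omega, by omega⟩
    rw [Int.cast_add, add_mul, Int.fract_add_of_fract_add_lt_one (by linarith)] at hadd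
    linarith [hα.fract_intCast_mul_pos hm0]

theorem isLeast_relativePositions_fract_add_one_sub_fract (hα : Irrational α)
    (hpmin : ∀ m ∈ Set.Ico 1 n, Int.fract (p * α) ≤ Int.fract (m * α))
    (hqmax : ∀ m ∈ Set.Ico 1 n, Int.fract (m * α) ≤ Int.fract (q * α))
    (hp : p ∈ Set.Ico 1 n) (hq : q ∈ Set.Ico 1 n) (hpk : n - k ≤ p) (hqk : k < q) :
    IsLeast (relativePositions α n k) (Int.fract (p * α) + (1 - Int.fract (q * α))) := by
  obtain ⟨hp1, hpn⟩ := hp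
  obtain ⟨hq1, hqn⟩ := hq
  have hinj := hα.injective_fract_intCast_mul
  -- `p = q` would make all `{mα}`, `0 < m < n`, equal, so `n = 2`; then no `k` fits both bounds.
  have hpq : p ≠ q := by
    rintro rfl
    have h1 : 1 = p := hinj ((hqmax 1 ⟨le_rfl, by omega⟩).antisymm (hpmin 1 ⟨le_rfl, by omega⟩))
    have h2 : n - 1 = p :=
      hinj ((hqmax _ ⟨by omega, by omega⟩).antisymm (hpmin _ ⟨by omega, by omega⟩))
    omega
  have hlt : Int.fract (p * α) < Int.fract (q * α) :=
    (hpmin q ⟨hq1, hqn⟩).lt_of_ne fun h => hpq (hinj h)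
  refine ⟨⟨p - q, ⟨⟨by omega, by omega⟩, by simp only [Set.mem_singleton_iff]; omega⟩, ?_⟩, ?_⟩
  · simp only [Int.cast_sub, sub_mul, Int.fract_sub_of_fract_lt hlt]
    ring
  rintro _ ⟨m, ⟨⟨hlo, hhi⟩, hm0 : m ≠ 0⟩, rfl⟩
  rcases hm0.lt_or_gt with hneg | hpos
  · have hmq : Int.fract ((-m : ℤ) * α) < Int.fract (q * α) :=
      (hqmax (-m) ⟨by omega, by omega⟩).lt_of_ne fun h => by have := hinj h; omega
    have hsub := hpmin (q - -m) ⟨by omega, by omega⟩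
    rw [Int.cast_sub, sub_mul, Int.fract_sub_of_fract_le hmq.le] at hsub
    linarith [hα.fract_intCast_mul_add_fract_neg hm0]
  · have hpm : Int.fract (p * α) < Int.fract (m * α) :=
      (hpmin m ⟨hpos, by omega⟩).lt_of_ne fun h => by have := hinj h; omega
    have hsub := hqmax (p - m) ⟨by omega, by omega⟩
    rw [Int.cast_sub, sub_mul, Int.fract_sub_of_fract_lt hpm] at hsub
    linarith

end RelativePositions

theorem scalePoints_eq_image (α : ℝ) (n : ℕ) :
    scalePoints α n = (fun j : ℤ => Int.fract (j * α)) '' Set.Ico 0 n := by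
  ext x
  constructor
  · rintro ⟨j, hj, rfl⟩
    exact ⟨j, ⟨j.cast_nonneg, by omega⟩, by simp⟩
  · rintro ⟨j, ⟨hj0, hjn⟩, rfl⟩
    exact ⟨j.toNat, by omega, by rw [← Int.cast_natCast, Int.toNat_of_nonneg hj0]⟩

theorem scalePoints_subsingleton (α : ℝ) {n : ℕ} (hn : n ≤ 1) :
    (scalePoints α n).Subsingleton := by
  rintro _ ⟨j, hj, rfl⟩ _ ⟨j', hj', rfl⟩
  obtain rfl : j = j' := by omega
  rfl

theorem gapOf_scalePoints {α : ℝ} (hα : Irrational α) (n : ℕ) (k : ℤ) :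
    gapOf (scalePoints α n) (Int.fract (k * α)) = sInf (relativePositions α n k) := by
  have hpoint : {Int.fract (k * α)} = (fun j : ℤ => Int.fract (j * α)) '' {k} :=
    (Set.image_singleton (f := fun j : ℤ => Int.fract (j * α)) (a := k)).symm
  have hwindow : Set.Ico (-k) (n - k) \ {0} = (· - k) '' (Set.Ico 0 n \ {k}) := by
    rw [Set.image_sdiff sub_left_injective, Set.image_singleton]
    simp
  rw [gapOf, scalePoints_eq_image, hpoint, ← Set.image_sdiff hα.injective_fract_intCast_mul,
    Set.image_image, relativePositions, hwindow, Set.image_image]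
  simp only [Int.fract_fract_sub_fract, Int.cast_sub, sub_mul]

theorem exists_pos_gapSet_subset {α : ℝ} (hα : Irrational α) {n : ℕ} (hn : 2 ≤ n) :
    ∃ d e : ℝ, 0 < d ∧ 0 < e ∧ gapSet α n ⊆ {d, e, d + e} := by
  have hne : (Set.Ico (1 : ℤ) n).Nonempty := ⟨1, le_rfl, by omega⟩
  obtain ⟨p, hp, hpmin⟩ :=
    (Set.Ico (1 : ℤ) n).exists_min_image (fun m : ℤ => Int.fract (m * α)) (Set.finite_Ico _ _) hne
  obtain ⟨q, hq, hqmax⟩ :=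
    (Set.Ico (1 : ℤ) n).exists_max_image (fun m : ℤ => Int.fract (m * α)) (Set.finite_Ico _ _) hne
  refine ⟨Int.fract (p * α), 1 - Int.fract (q * α), hα.fract_intCast_mul_pos (by grind),
    sub_pos.2 (Int.fract_lt_one _), ?_⟩
  rintro _ ⟨_, hx, rfl⟩
  rw [scalePoints_eq_image] at hx
  obtain ⟨k, ⟨hk0, hkn⟩, rfl⟩ := hx
  dsimp only
  rw [gapOf_scalePoints hα]
  by_cases hpk : p < n - k
  · exact Or.inl (isLeast_relativePositions_fract hα hpmin hp.1 hk0 hpk).csInf_eq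
  by_cases hqk : q ≤ k
  · exact Or.inr (Or.inl (isLeast_relativePositions_one_sub_fract hα hqmax hq.1 hqk hkn).csInf_eq)
  exact Or.inr (Or.inr (isLeast_relativePositions_fract_add_one_sub_fract hα hpmin hqmax hp hq
    (not_lt.1 hpk) (not_le.1 hqk)).csInf_eq)

theorem eq_add_of_subset_of_lt {K : Type*} [Field K] [LinearOrder K] [IsStrictOrderedRing K]
    {a b c d e : K} (hd : 0 < d) (he : 0 < e) (hab : a < b) (hbc : b < c)
    (h : ({a, b, c} : Set K) ⊆ {d, e, d + e}) : c = a + b := by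
  have ha : a ∈ ({d, e, d + e} : Set K) := h (by simp)
  have hb : b ∈ ({d, e, d + e} : Set K) := h (by simp)
  have hc : c ∈ ({d, e, d + e} : Set K) := h (by simp)
  rcases ha with rfl | rfl | rfl <;> rcases hb with rfl | rfl | rfl <;>
    rcases hc with rfl | rfl | rfl <;> linarith

theorem three_distance_largest_gap_general (α : ℝ) (hα : Irrational α) (n : ℕ)
    (a b c : ℝ) (hab : a < b) (hbc : b < c)
    (h : gapSet α n = {a, b, c}) :
    c = a + b := by
  rcases le_or_gt n 1 with hn | hn
  · have hsub : (gapSet α n).Subsingleton := (scalePoints_subsingleton α hn).image _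
    exact absurd (hsub (h ▸ by simp) (h ▸ by simp)) hab.ne
  · obtain ⟨d, e, hd, he, hsub⟩ := exists_pos_gapSet_subset hα hn
    exact eq_add_of_subset_of_lt hd he hab hbc (h ▸ hsub)

/-- **Three-distance theorem, largest gap**: if three distinct gap lengths occur,
the largest is the sum of the other two. -/
theorem three_distance_largest_gap (α : ℝ) (hα : Irrational α) (n : ℕ) (hn : 0 < n)
    (a b c : ℝ) (hab : a < b) (hbc : b < c)
    (h : gapSet α n = {a, b, c}) :
    c = a + b :=
  three_distance_largest_gap_general α hα n a b c hab hbc h
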